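/- Let G be a finite simple graph of order n ≥ 1 and let r ≥ 1 be an integer. The corona G ∘ \overline{K_r} (obtained from G by attaching r new pendant leaves to each vertex of G) has exactly 2^{n-1} domatic partitions with 2 parts and no domatic partition with 3 or more parts; equivalently DP(G ∘ \overline{K_r}, x) = x + 2^{n-1}x². -/

import Mathlib

/-- `S` is a dominating set of `G`: every vertex outside `S` has a neighbor in `S`. -/
def IsDominating {V : Type*} (G : SimpleGraph V) (S : Set V) : Prop :=
  ∀ v, v ∉ S → ∃ u ∈ S, G.Adj v u

/-- A domatic partition of `G`: a partition of the vertex set into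
(pairwise disjoint, nonempty) dominating sets. -/
def IsDomaticPartition {V : Type*} (G : SimpleGraph V) (P : Set (Set V)) : Prop :=
  Setoid.IsPartition P ∧ ∀ S ∈ P, IsDominating G S

/-- `dp G i` is the number of domatic partitions of `G` with exactly `i` parts. -/
noncomputable def dp {V : Type*} (G : SimpleGraph V) (i : ℕ) : ℕ :=
  {P : Set (Set V) | IsDomaticPartition G P ∧ P.ncard = i}.ncard

/-- The corona `G ∘ K̄ᵣ`: attach `r` new pendant leaves `Sum.inr (v, j)`,
`j : Fin r`, to each vertex `Sum.inl v` of `G`. -/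
def corona {V : Type*} (G : SimpleGraph V) (r : ℕ) : SimpleGraph (V ⊕ V × Fin r) where
  Adj a b :=
    match a, b with
    | Sum.inl u, Sum.inl v => G.Adj u v
    | Sum.inl u, Sum.inr (v, _) => u = v
    | Sum.inr (u, _), Sum.inl v => u = v
    | Sum.inr _, Sum.inr _ => False
  symm := ⟨by
    rintro (u | ⟨u, i⟩) (v | ⟨v, j⟩) h <;> simp_all [SimpleGraph.adj_comm]⟩
  loopless := ⟨by
    rintro (u | ⟨u, i⟩) h <;> simp_all⟩

/-!
A leaf of the corona has a single neighbour, its centre, so every part of a domatic partition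
contains that leaf or its centre: there are at most two parts. In a two-part domatic partition
`{A, Aᶜ}` each leaf must lie in the part opposite its centre, so `A` is determined by the set of
centres it contains; conversely, for `r ≥ 1` every set of centres `s` yields such a partition.
Normalising `A` to be the part containing a fixed centre `v₀` leaves the `2^(n-1)` sets `s ∋ v₀`.
-/

open Set

theorem Set.ncard_setOf_mem {α : Type*} [Finite α] (a : α) :
    {s : Set α | a ∈ s}.ncard = 2 ^ (Nat.card α - 1) := by
  have himage : {s : Set α | a ∈ s} = insert a '' 𝒫 {a}ᶜ := by
    ext s
    refine ⟨fun ha => ⟨s \ {a}, fun x hx => hx.2, ?_⟩, ?_⟩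
    · rw [insert_sdiff_singleton]
      exact insert_eq_of_mem ha
    · rintro ⟨t, -, rfl⟩
      exact mem_insert a t
  have hinj : InjOn (insert a) (𝒫 {a}ᶜ) := fun s hs t ht hst => by
    rw [← insert_sdiff_self_of_notMem (hs · rfl), hst, insert_sdiff_self_of_notMem (ht · rfl)]
  rw [himage, hinj.ncard_image, ncard_powerset, ncard_compl, ncard_singleton]

namespace Setoid

variable {α : Type*}

theorem isPartition_pair_compl {A : Set α} (hA : A.Nonempty) (hAc : Aᶜ.Nonempty) :
    IsPartition ({A, Aᶜ} : Set (Set α)) := by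
  refine ⟨?_, fun x => ?_⟩
  · rintro (h | h)
    exacts [hA.ne_empty h.symm, hAc.ne_empty h.symm]
  · by_cases hx : x ∈ A
    · refine ⟨A, ⟨Or.inl rfl, hx⟩, ?_⟩
      rintro S ⟨rfl | rfl, hS⟩
      exacts [rfl, absurd hx hS]
    · refine ⟨Aᶜ, ⟨Or.inr rfl, hx⟩, ?_⟩
      rintro S ⟨rfl | rfl, hS⟩
      exacts [absurd hS hx, rfl]

theorem IsPartition.exists_eq_pair_compl {P : Set (Set α)} (hP : IsPartition P)
    (h2 : P.ncard = 2) (a : α) : ∃ A, a ∈ A ∧ P = {A, Aᶜ} := by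
  obtain ⟨S, T, hST, rfl⟩ := ncard_eq_two.mp h2
  have hT : T = Sᶜ := by
    ext x
    obtain ⟨B, ⟨hB, hxB⟩, huniq⟩ := hP.2 x
    refine ⟨fun hxT hxS => hST ?_, fun hxS => ?_⟩
    · exact (huniq S ⟨Or.inl rfl, hxS⟩).trans (huniq T ⟨Or.inr rfl, hxT⟩).symm
    · rcases hB with rfl | rfl
      exacts [absurd hxB hxS, hxB]
  subst hT
  obtain ⟨B, ⟨rfl | rfl, haB⟩, -⟩ := hP.2 a
  · exact ⟨B, haB, rfl⟩
  · exact ⟨Sᶜ, haB, by rw [compl_compl, pair_comm]⟩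

end Setoid

section Domatic

variable {V : Type*} {G : SimpleGraph V}

theorem IsDomaticPartition.ncard_le_two_of_forall_adj_eq {P : Set (Set V)}
    (hP : IsDomaticPartition G P) {w v : V} (hw : ∀ u, G.Adj w u → u = v) : P.ncard ≤ 2 := by
  obtain ⟨S, ⟨-, hwS⟩, hS⟩ := hP.1.2 w
  obtain ⟨T, ⟨-, hvT⟩, hT⟩ := hP.1.2 v
  have hsub : P ⊆ {S, T} := by
    intro R hR
    by_cases hwR : w ∈ R
    · exact Or.inl (hS R ⟨hR, hwR⟩)
    · obtain ⟨u, huR, hwu⟩ := hP.2 R hR w hwR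
      exact Or.inr (hT R ⟨hR, hw u hwu ▸ huR⟩)
  calc P.ncard ≤ ({S, T} : Set (Set V)).ncard := ncard_le_ncard hsub (toFinite _)
    _ ≤ ({T} : Set (Set V)).ncard + 1 := ncard_insert_le S {T}
    _ = 2 := by rw [ncard_singleton]

theorem dp_two_eq_ncard (a : V) :
    dp G 2 = {A : Set V | a ∈ A ∧ IsDominating G A ∧ IsDominating G Aᶜ}.ncard := by
  symm
  refine ncard_congr (fun A _ => ({A, Aᶜ} : Set (Set V))) ?_ ?_ ?_
  · rintro A ⟨haA, hA, hAc⟩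
    have hAc_ne : Aᶜ.Nonempty := (hAc a (not_not.mpr haA)).imp fun _ h => h.1
    refine ⟨⟨Setoid.isPartition_pair_compl ⟨a, haA⟩ hAc_ne, ?_⟩, ncard_pair ?_⟩
    · rintro S (rfl | rfl)
      exacts [hA, hAc]
    · exact fun h => (h ▸ haA : a ∈ Aᶜ) haA
  · rintro A B ⟨haA, -⟩ ⟨haB, -⟩ hAB
    rcases pair_eq_pair_iff.mp hAB with ⟨h, -⟩ | ⟨h, -⟩
    · exact h
    · exact absurd haB (h ▸ haA : a ∈ Bᶜ)
  · rintro P ⟨hP, h2⟩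
    obtain ⟨A, haA, rfl⟩ := hP.1.exists_eq_pair_compl h2 a
    exact ⟨A, ⟨haA, hP.2 A (Or.inl rfl), hP.2 Aᶜ (Or.inr rfl)⟩, rfl⟩

end Domatic

section Corona

variable {V : Type*} {G : SimpleGraph V} {r : ℕ}

def coronaSide (r : ℕ) (s : Set V) : Set (V ⊕ V × Fin r) :=
  {x | Sum.elim (· ∈ s) (fun p => p.1 ∉ s) x}

@[simp]
theorem mem_coronaSide_inl {s : Set V} {v : V} : Sum.inl v ∈ coronaSide r s ↔ v ∈ s :=
  Iff.rfl

@[simp]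
theorem mem_coronaSide_inr {s : Set V} {v : V} {j : Fin r} :
    Sum.inr (v, j) ∈ coronaSide r s ↔ v ∉ s :=
  Iff.rfl

theorem compl_coronaSide (s : Set V) : (coronaSide r s)ᶜ = coronaSide r sᶜ := by
  ext (v | ⟨v, j⟩) <;> simp

theorem coronaSide_injective : Function.Injective (coronaSide (V := V) r) :=
  fun _ _ h => congrArg (Sum.inl ⁻¹' ·) h

theorem corona_adj_inr_iff {v : V} {j : Fin r} {x : V ⊕ V × Fin r} :
    (corona G r).Adj (Sum.inr (v, j)) x ↔ x = Sum.inl v := by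
  rcases x with u | ⟨u, k⟩
  · exact ⟨fun h => congrArg Sum.inl h.symm, fun h => (Sum.inl_injective h).symm⟩
  · exact ⟨False.elim, fun h => Sum.inr_ne_inl h⟩

theorem isDominating_coronaSide (hr : 1 ≤ r) (s : Set V) :
    IsDominating (corona G r) (coronaSide r s) := by
  rintro (v | ⟨v, j⟩) hx
  · exact ⟨Sum.inr (v, ⟨0, hr⟩), hx, rfl⟩
  · exact ⟨Sum.inl v, not_not.mp hx, rfl⟩

theorem eq_coronaSide_of_isDominating {A : Set (V ⊕ V × Fin r)}
    (hA : IsDominating (corona G r) A) (hAc : IsDominating (corona G r) Aᶜ) :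
    A = coronaSide r (Sum.inl ⁻¹' A) := by
  ext (v | ⟨v, j⟩)
  · rfl
  · refine ⟨fun hleaf hv => ?_, fun hv => by_contra fun hleaf => hv ?_⟩
    · obtain ⟨x, hx, hadj⟩ := hAc _ (not_not.mpr hleaf)
      exact hx (corona_adj_inr_iff.mp hadj ▸ hv)
    · obtain ⟨x, hx, hadj⟩ := hA _ hleaf
      rw [corona_adj_inr_iff] at hadj
      subst hadj
      exact hx

theorem setOf_isDominating_compl_corona (hr : 1 ≤ r) (v₀ : V) :
    {A : Set (V ⊕ V × Fin r) | Sum.inl v₀ ∈ A ∧ IsDominating (corona G r) A ∧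
      IsDominating (corona G r) Aᶜ} = coronaSide r '' {s | v₀ ∈ s} := by
  ext A
  constructor
  · rintro ⟨hv₀, hA, hAc⟩
    exact ⟨Sum.inl ⁻¹' A, hv₀, (eq_coronaSide_of_isDominating hA hAc).symm⟩
  · rintro ⟨s, hv₀, rfl⟩
    refine ⟨hv₀, isDominating_coronaSide hr s, ?_⟩
    rw [compl_coronaSide]
    exact isDominating_coronaSide hr sᶜ

end Corona

/-- For a finite graph `G` of order `n ≥ 1` and `r ≥ 1`, the corona `G ∘ K̄ᵣ`
has exactly `2^(n-1)` domatic partitions with two parts and no domatic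
partition with three or more parts; equivalently
`DP(G ∘ K̄ᵣ, x) = x + 2^(n-1) x²`. -/
theorem dp_corona (V : Type*) [Fintype V] (G : SimpleGraph V) (r : ℕ) (hr : 1 ≤ r)
    (hn : 1 ≤ Fintype.card V) :
    dp (corona G r) 2 = 2 ^ (Fintype.card V - 1) ∧
      ∀ P : Set (Set (V ⊕ V × Fin r)),
        IsDomaticPartition (corona G r) P → P.ncard ≤ 2 := by
  obtain ⟨v₀⟩ : Nonempty V := Fintype.card_pos_iff.mp hn
  refine ⟨?_, fun P hP => hP.ncard_le_two_of_forall_adj_eq (w := Sum.inr (v₀, ⟨0, hr⟩))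
    fun _ => corona_adj_inr_iff.mp⟩
  rw [dp_two_eq_ncard (Sum.inl v₀), setOf_isDominating_compl_corona hr,
    ncard_image_of_injective _ coronaSide_injective, ncard_setOf_mem, Nat.card_eq_fintype_card]
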